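/- Let d ≥ 4. Let 𝕊_d be the space of symmetric real d×d matrices with all diagonal entries zero. Let 𝕊_{d,1} = ℝ·(J_d − I_d) where J_d is the all-ones matrix; let 𝕊_{d,2} be the set of A ∈ 𝕊_d for which there exists x ∈ ℝᵈ with Σᵢ xᵢ = 0 such that A_{ij} = x_i + x_j for all i ≠ j; and let 𝕊_{d,3} be the set of A ∈ 𝕊_d all of whose row sums are zero. Then 𝕊_d = 𝕊_{d,1} ⊕ 𝕊_{d,2} ⊕ 𝕊_{d,3}; the three summands are pairwise orthogonal with respect to the Frobenius inner product; each is invariant under the diagonal S_d-action W ↦ P_σ W P_σᵀ; and dim 𝕊_{d,1} = 1, dim 𝕊_{d,2} = d − 1, dim 𝕊_{d,3} = d(d−3)/2. -/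

import Mathlib

open Matrix

/-- The permutation matrix of `σ`. -/
def permMat {d : ℕ} (σ : Equiv.Perm (Fin d)) : Matrix (Fin d) (Fin d) ℝ :=
  Matrix.of fun i j => if σ j = i then (1 : ℝ) else 0

/-- The all-ones matrix. -/
def Jmat (d : ℕ) : Matrix (Fin d) (Fin d) ℝ := Matrix.of fun _ _ => (1 : ℝ)

/-- `𝕊_d`: symmetric matrices with zero diagonal. -/
def Ssym (d : ℕ) : Submodule ℝ (Matrix (Fin d) (Fin d) ℝ) where
  carrier := {A | Aᵀ = A ∧ ∀ i, A i i = 0}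
  zero_mem' := ⟨by simp, fun i => rfl⟩
  add_mem' := by
    rintro a b ⟨ha1, ha2⟩ ⟨hb1, hb2⟩
    exact ⟨by rw [Matrix.transpose_add, ha1, hb1],
      fun i => by simp [Matrix.add_apply, ha2 i, hb2 i]⟩
  smul_mem' := by
    rintro c a ⟨ha1, ha2⟩
    exact ⟨by rw [Matrix.transpose_smul, ha1],
      fun i => by simp [Matrix.smul_apply, ha2 i]⟩

/-- `𝕊_{d,1} = ℝ·(J − I)`. -/
def Sd1 (d : ℕ) : Submodule ℝ (Matrix (Fin d) (Fin d) ℝ) :=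
  Submodule.span ℝ {Jmat d - 1}

/-- `𝕊_{d,2}`: symmetric, zero diagonal, off-diagonal entries `x i + x j`, `∑ x = 0`. -/
def Sd2 (d : ℕ) : Submodule ℝ (Matrix (Fin d) (Fin d) ℝ) where
  carrier := {A | ∃ x : Fin d → ℝ, (∑ i, x i = 0) ∧ (∀ i, A i i = 0) ∧
    ∀ i j, i ≠ j → A i j = x i + x j}
  zero_mem' := ⟨0, by simp, fun i => rfl, fun i j _ => by simp⟩
  add_mem' := by
    rintro a b ⟨x, hx0, hxd, hx⟩ ⟨y, hy0, hyd, hy⟩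
    refine ⟨x + y, by simp [Finset.sum_add_distrib, hx0, hy0], fun i => ?_,
      fun i j hij => ?_⟩
    · simp [Matrix.add_apply, hxd i, hyd i]
    · simp [Matrix.add_apply, hx i j hij, hy i j hij]; ring
  smul_mem' := by
    rintro c a ⟨x, hx0, hxd, hx⟩
    refine ⟨c • x, by simp [← Finset.mul_sum, hx0], fun i => ?_, fun i j hij => ?_⟩
    · simp [Matrix.smul_apply, hxd i]
    · simp [Matrix.smul_apply, hx i j hij]; ring

/-- `𝕊_{d,3}`: symmetric, zero diagonal, all row sums zero. -/
def Sd3 (d : ℕ) : Submodule ℝ (Matrix (Fin d) (Fin d) ℝ) where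
  carrier := {A | Aᵀ = A ∧ (∀ i, A i i = 0) ∧ ∀ i, ∑ j, A i j = 0}
  zero_mem' := ⟨by simp, fun i => rfl, by simp⟩
  add_mem' := by
    rintro a b ⟨ha1, ha2, ha3⟩ ⟨hb1, hb2, hb3⟩
    refine ⟨by rw [Matrix.transpose_add, ha1, hb1], fun i => ?_, fun i => ?_⟩
    · simp [Matrix.add_apply, ha2 i, hb2 i]
    · simp [Matrix.add_apply, Finset.sum_add_distrib, ha3 i, hb3 i]
  smul_mem' := by
    rintro c a ⟨ha1, ha2, ha3⟩
    refine ⟨by rw [Matrix.transpose_smul, ha1], fun i => ?_, fun i => ?_⟩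
    · simp [Matrix.smul_apply, ha2 i]
    · simp [Matrix.smul_apply, ← Finset.mul_sum, ha3 i]

/-!
Everything is organised around the linear map `pairSum x`, the zero-diagonal matrix with
off-diagonal entries `x i + x j`. Its range is `𝕊_{d,1} ⊔ 𝕊_{d,2}` (split `x` into its
mean and a part summing to zero), and its row sums are `(d - 2) x i + ∑ x`; for `d ≥ 3` this
makes it injective and lets one match the row sums of any `A ∈ 𝕊_d`, so that
`A - pairSum x ∈ 𝕊_{d,3}`. Since `⟨pairSum x, B⟩ = ∑ᵢ xᵢ (row sum i + column sum i of B)`,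
the range is orthogonal to `𝕊_{d,3}`, and the dimensions follow from `dim 𝕊_d = d.choose 2`.
-/

theorem trace_transpose_mul_eq_sum {m n : Type*} [Fintype m] [Fintype n] (A B : Matrix m n ℝ) :
    trace (Aᵀ * B) = ∑ i, ∑ j, A i j * B i j := by
  simp only [trace, Matrix.diag, mul_apply, transpose_apply]
  exact Finset.sum_comm

section PairSum

variable {n : Type*} [DecidableEq n]

variable (n) in
def pairSum : (n → ℝ) →ₗ[ℝ] Matrix n n ℝ where
  toFun x := of fun i j => if i = j then 0 else x i + x j
  map_add' x y := by
    ext i j; simp only [of_apply, Matrix.add_apply, Pi.add_apply]; split_ifs <;> ring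
  map_smul' c x := by
    ext i j
    simp only [of_apply, Matrix.smul_apply, Pi.smul_apply, smul_eq_mul, RingHom.id_apply]
    split_ifs <;> ring

@[simp]
theorem pairSum_apply_self (x : n → ℝ) (i : n) : pairSum n x i i = 0 := by
  simp [pairSum]

theorem pairSum_apply_of_ne (x : n → ℝ) {i j : n} (h : i ≠ j) :
    pairSum n x i j = x i + x j := by
  simp [pairSum, h]

theorem pairSum_transpose (x : n → ℝ) : (pairSum n x)ᵀ = pairSum n x := by
  ext i j
  obtain rfl | h := eq_or_ne i j
  · rfl
  · rw [transpose_apply, pairSum_apply_of_ne x h, pairSum_apply_of_ne x h.symm, add_comm]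

theorem pairSum_submatrix (x : n → ℝ) (e : n ≃ n) :
    (pairSum n x).submatrix e e = pairSum n (x ∘ e) := by
  ext i j
  simp [pairSum, e.injective.eq_iff]

theorem pairSum_eq_iff {x : n → ℝ} {A : Matrix n n ℝ} :
    pairSum n x = A ↔ (∀ i, A i i = 0) ∧ ∀ i j, i ≠ j → A i j = x i + x j := by
  constructor
  · rintro rfl
    exact ⟨pairSum_apply_self x, fun i j h => pairSum_apply_of_ne x h⟩
  · rintro ⟨hdiag, hoff⟩
    ext i j
    obtain rfl | h := eq_or_ne i j
    · rw [pairSum_apply_self, hdiag]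
    · rw [pairSum_apply_of_ne x h, hoff i j h]

variable [Fintype n]

theorem sum_pairSum_apply (x : n → ℝ) (i : n) :
    ∑ j, pairSum n x i j = ((Fintype.card n : ℝ) - 2) * x i + ∑ j, x j := by
  rw [← Finset.sum_erase_add _ _ (Finset.mem_univ i), pairSum_apply_self, add_zero,
    Finset.sum_congr rfl fun j hj => pairSum_apply_of_ne x (Finset.ne_of_mem_erase hj).symm,
    Finset.sum_add_distrib, Finset.sum_const, Finset.card_erase_of_mem (Finset.mem_univ i),
    Finset.card_univ, nsmul_eq_mul, Finset.sum_erase_eq_sub (Finset.mem_univ i),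
    Nat.cast_pred (Fintype.card_pos_iff.mpr ⟨i⟩)]
  ring

theorem pairSum_injective (hn : 3 ≤ Fintype.card n) : Function.Injective (pairSum n) := by
  rw [← LinearMap.ker_eq_bot, LinearMap.ker_eq_bot']
  intro x hx
  have hrow (i : n) : ((Fintype.card n : ℝ) - 2) * x i + ∑ j, x j = 0 := by
    simp [← sum_pairSum_apply, hx]
  have hcard : (3 : ℝ) ≤ Fintype.card n := by exact_mod_cast hn
  have hsum : ∑ j, x j = 0 := by
    have := Finset.sum_eq_zero fun i (_ : i ∈ Finset.univ) => hrow i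
    rw [Finset.sum_add_distrib, ← Finset.mul_sum, Finset.sum_const, Finset.card_univ,
      nsmul_eq_mul] at this
    nlinarith
  ext i
  simpa [hsum, show (Fintype.card n : ℝ) - 2 ≠ 0 by linarith] using hrow i

theorem trace_transpose_pairSum_mul (x : n → ℝ) {B : Matrix n n ℝ} (hB : ∀ i, B i i = 0) :
    trace ((pairSum n x)ᵀ * B) = ∑ i, x i * ∑ j, B i j + ∑ j, x j * ∑ i, B i j := by
  have hentry (i j : n) : pairSum n x i j * B i j = x i * B i j + x j * B i j := by
    obtain rfl | h := eq_or_ne i j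
    · simp [hB]
    · rw [pairSum_apply_of_ne x h]; ring
  simp only [trace_transpose_mul_eq_sum, hentry, Finset.sum_add_distrib, Finset.mul_sum]
  rw [Finset.sum_comm (f := fun i j => x j * B i j)]

end PairSum

section Ssym

variable {n : Type*} [DecidableEq n]

variable (n) in
def offDiagOfSym2 : ({z : Sym2 n // ¬z.IsDiag} → ℝ) →ₗ[ℝ] Matrix n n ℝ where
  toFun f := of fun i j => if h : i = j then 0 else f ⟨s(i, j), Sym2.mk_isDiag_iff.not.mpr h⟩
  map_add' f g := by
    ext i j; simp only [of_apply, Matrix.add_apply, Pi.add_apply]; split_ifs <;> simp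
  map_smul' c f := by
    ext i j
    simp only [of_apply, Matrix.smul_apply, Pi.smul_apply, smul_eq_mul, RingHom.id_apply]
    split_ifs <;> simp

theorem offDiagOfSym2_injective : Function.Injective (offDiagOfSym2 n) := by
  rw [← LinearMap.ker_eq_bot, LinearMap.ker_eq_bot']
  rintro f hf
  ext ⟨z, hz⟩
  induction z using Sym2.ind with
  | h i j =>
    have hij : i ≠ j := Sym2.mk_isDiag_iff.not.mp hz
    simpa [offDiagOfSym2, hij] using congrFun₂ hf i j

theorem range_offDiagOfSym2 (d : ℕ) : LinearMap.range (offDiagOfSym2 (Fin d)) = Ssym d := by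
  apply le_antisymm
  · rintro _ ⟨f, rfl⟩
    refine ⟨?_, fun i => by simp [offDiagOfSym2]⟩
    ext i j
    obtain rfl | h := eq_or_ne i j
    · rfl
    · simp [offDiagOfSym2, h, h.symm, Sym2.eq_swap]
  · rintro A ⟨hsymm, hdiag⟩
    refine ⟨fun z => Sym2.lift ⟨A, fun i j => congrFun₂ hsymm j i⟩ z, ?_⟩
    ext i j
    obtain rfl | h := eq_or_ne i j
    · simp [offDiagOfSym2, hdiag]
    · simp [offDiagOfSym2, h]

end Ssym

theorem finrank_Ssym (d : ℕ) : Module.finrank ℝ (Ssym d) = d.choose 2 := by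
  rw [← range_offDiagOfSym2, LinearMap.finrank_range_of_inj offDiagOfSym2_injective,
    Module.finrank_fintype_fun_eq_card, Sym2.card_subtype_not_diag, Fintype.card_fin]

theorem permMat_mul_mul_transpose {d : ℕ} (σ : Equiv.Perm (Fin d))
    (A : Matrix (Fin d) (Fin d) ℝ) :
    permMat σ * A * (permMat σ)ᵀ = A.submatrix σ.symm σ.symm := by
  have h : permMat σ = σ.symm.toPEquiv.toMatrix := by
    ext i j
    simp [permMat, PEquiv.toMatrix_apply, Equiv.symm_apply_eq, @eq_comm _ i]
  rw [h, PEquiv.toMatrix_toPEquiv_mul, ← PEquiv.toMatrix_symm, ← Equiv.toPEquiv_symm,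
    PEquiv.mul_toMatrix_toPEquiv]
  rfl

def FrobeniusOrthogonal {m n : Type*} [Fintype m] [Fintype n]
    (p q : Submodule ℝ (Matrix m n ℝ)) : Prop :=
  ∀ A ∈ p, ∀ B ∈ q, trace (Aᵀ * B) = 0

namespace FrobeniusOrthogonal

variable {m n : Type*} [Fintype m] [Fintype n] {p p' q : Submodule ℝ (Matrix m n ℝ)}

theorem mono_left (h : FrobeniusOrthogonal p' q) (hp : p ≤ p') : FrobeniusOrthogonal p q :=
  fun A hA => h A (hp hA)

theorem disjoint (h : FrobeniusOrthogonal p q) : Disjoint p q := by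
  rw [Submodule.disjoint_def]
  intro A hp hq
  rw [← trace_conjTranspose_mul_self_eq_zero_iff, conjTranspose_eq_transpose_of_trivial]
  exact h A hp A hq

end FrobeniusOrthogonal

theorem Nat.choose_two_sub_self (n : ℕ) : n.choose 2 - n = n * (n - 3) / 2 := by
  obtain hn | ⟨k, rfl⟩ : n < 3 ∨ ∃ k, n = k + 3 := by
    rcases lt_or_ge n 3 with h | h
    · exact .inl h
    · exact .inr ⟨n - 3, by omega⟩
  · interval_cases n <;> rfl
  · rw [Nat.choose_two_right, Nat.add_sub_cancel, show k + 3 - 1 = k + 2 by omega,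
      show (k + 3) * (k + 2) = k * (k + 3) + 2 * (k + 3) by ring,
      Nat.add_mul_div_left _ _ two_pos, Nat.add_sub_cancel, mul_comm]

section Decomposition

variable {d : ℕ}

theorem pairSum_const (c : ℝ) : pairSum (Fin d) (fun _ => c) = (2 * c) • (Jmat d - 1) := by
  ext i j
  obtain rfl | h := eq_or_ne i j
  · simp [Jmat]
  · simp [pairSum_apply_of_ne _ h, Jmat, h]
    ring

theorem Jmat_sub_one_ne_zero (hd : 2 ≤ d) : Jmat d - 1 ≠ 0 := by
  intro h
  simpa [Jmat, one_apply, Fin.ext_iff] using congrFun₂ h ⟨0, by omega⟩ ⟨1, by omega⟩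

theorem mem_Sd1_iff {A : Matrix (Fin d) (Fin d) ℝ} :
    A ∈ Sd1 d ↔ ∃ c, pairSum (Fin d) (fun _ => c) = A := by
  simp only [Sd1, Submodule.mem_span_singleton, pairSum_const]
  constructor
  · rintro ⟨a, rfl⟩
    exact ⟨a / 2, by ring_nf⟩
  · rintro ⟨c, rfl⟩
    exact ⟨2 * c, rfl⟩

theorem mem_Sd2_iff {A : Matrix (Fin d) (Fin d) ℝ} :
    A ∈ Sd2 d ↔ ∃ x, ∑ i, x i = 0 ∧ pairSum (Fin d) x = A := by
  simp only [pairSum_eq_iff]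
  rfl

theorem Sd2_eq_map :
    Sd2 d = (LinearMap.ker (∑ i, LinearMap.proj i : Module.Dual ℝ (Fin d → ℝ))).map
      (pairSum (Fin d)) := by
  ext A
  simp [mem_Sd2_iff]

theorem Sd1_sup_Sd2 : Sd1 d ⊔ Sd2 d = LinearMap.range (pairSum (Fin d)) := by
  apply le_antisymm
  · refine sup_le (fun A hA => ?_) (fun A hA => ?_)
    · obtain ⟨c, rfl⟩ := mem_Sd1_iff.mp hA
      exact LinearMap.mem_range_self _ _
    · obtain ⟨x, -, rfl⟩ := mem_Sd2_iff.mp hA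
      exact LinearMap.mem_range_self _ _
  · rintro _ ⟨x, rfl⟩
    set m := (∑ i, x i) / d
    set y : Fin d → ℝ := fun i => x i - m
    have hsplit :
        pairSum (Fin d) x = pairSum (Fin d) (fun _ => m) + pairSum (Fin d) y := by
      rw [← map_add]
      congr 1
      ext i
      simp [y]
    have hmean : ∑ i, y i = 0 := by
      rcases Nat.eq_zero_or_pos d with rfl | hd
      · simp
      · have hd' : (d : ℝ) ≠ 0 := by positivity
        simp [y, Finset.sum_sub_distrib, m, mul_div_cancel₀ _ hd']
    rw [hsplit]
    exact Submodule.add_mem_sup (mem_Sd1_iff.mpr ⟨m, rfl⟩) (mem_Sd2_iff.mpr ⟨_, hmean, rfl⟩)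

theorem range_pairSum_le_Ssym : LinearMap.range (pairSum (Fin d)) ≤ Ssym d := by
  rintro _ ⟨x, rfl⟩
  exact ⟨pairSum_transpose x, pairSum_apply_self x⟩

theorem Sd3_le_Ssym : Sd3 d ≤ Ssym d :=
  fun _ ⟨hsymm, hdiag, _⟩ => ⟨hsymm, hdiag⟩

theorem Ssym_le_range_pairSum_sup_Sd3 (hd : 3 ≤ d) :
    Ssym d ≤ LinearMap.range (pairSum (Fin d)) ⊔ Sd3 d := by
  rintro A ⟨hsymm, hdiag⟩
  have hd' : (3 : ℝ) ≤ d := by exact_mod_cast hd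
  have hd1 : (d : ℝ) - 1 ≠ 0 := by linarith
  have hd2 : (d : ℝ) - 2 ≠ 0 := by linarith
  set s : Fin d → ℝ := fun i => ∑ j, A i j
  set t : ℝ := (∑ i, s i) / (2 * (d - 1))
  -- solve `(d - 2) x i + ∑ x = s i`, which forces `∑ x = t`
  set x : Fin d → ℝ := fun i => (s i - t) / (d - 2)
  have hsum : ∑ i, x i = t := by
    simp only [x, t, ← Finset.sum_div, Finset.sum_sub_distrib, Finset.sum_const,
      Finset.card_univ, Fintype.card_fin, nsmul_eq_mul]
    field_simp
    ring
  have hrow (i : Fin d) : ∑ j, pairSum (Fin d) x i j = s i := by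
    rw [sum_pairSum_apply, Fintype.card_fin, hsum]
    simp only [x]
    field_simp
    ring
  refine Submodule.mem_sup.mpr ⟨pairSum (Fin d) x, LinearMap.mem_range_self _ _,
    A - pairSum (Fin d) x, ⟨?_, fun i => ?_, fun i => ?_⟩, add_sub_cancel _ _⟩
  · rw [transpose_sub, hsymm, pairSum_transpose]
  · simp [hdiag]
  · simp [Finset.sum_sub_distrib, hrow, s]

theorem range_pairSum_sup_Sd3 (hd : 3 ≤ d) :
    LinearMap.range (pairSum (Fin d)) ⊔ Sd3 d = Ssym d :=
  le_antisymm (sup_le range_pairSum_le_Ssym Sd3_le_Ssym) (Ssym_le_range_pairSum_sup_Sd3 hd)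

theorem frobeniusOrthogonal_range_pairSum_Sd3 :
    FrobeniusOrthogonal (LinearMap.range (pairSum (Fin d))) (Sd3 d) := by
  rintro _ ⟨x, rfl⟩ B ⟨hsymm, hdiag, hrow⟩
  have hcol (j : Fin d) : ∑ i, B i j = 0 :=
    (Finset.sum_congr rfl fun i _ => congrFun₂ hsymm j i).trans (hrow j)
  simp [trace_transpose_pairSum_mul x hdiag, hrow, hcol]

theorem frobeniusOrthogonal_Sd1_Sd2 : FrobeniusOrthogonal (Sd1 d) (Sd2 d) := by
  intro A hA B hB
  obtain ⟨c, rfl⟩ := mem_Sd1_iff.mp hA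
  obtain ⟨y, hy, rfl⟩ := mem_Sd2_iff.mp hB
  have htotal : ∑ i, ∑ j, pairSum (Fin d) y i j = 0 := by
    simp [sum_pairSum_apply, ← Finset.mul_sum, hy]
  rw [trace_transpose_pairSum_mul _ (pairSum_apply_self y), ← Finset.mul_sum, ← Finset.mul_sum,
    Finset.sum_comm (γ := Fin d) (f := fun j i => pairSum (Fin d) y i j), htotal]
  ring

theorem submatrix_mem_Sd1 (e : Equiv.Perm (Fin d)) {A : Matrix (Fin d) (Fin d) ℝ}
    (hA : A ∈ Sd1 d) : A.submatrix e e ∈ Sd1 d := by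
  obtain ⟨c, rfl⟩ := mem_Sd1_iff.mp hA
  exact mem_Sd1_iff.mpr ⟨c, (pairSum_submatrix (fun _ => c) e).symm⟩

theorem submatrix_mem_Sd2 (e : Equiv.Perm (Fin d)) {A : Matrix (Fin d) (Fin d) ℝ}
    (hA : A ∈ Sd2 d) : A.submatrix e e ∈ Sd2 d := by
  obtain ⟨x, hx, rfl⟩ := mem_Sd2_iff.mp hA
  exact mem_Sd2_iff.mpr ⟨x ∘ e, (Equiv.sum_comp e x).trans hx, (pairSum_submatrix x e).symm⟩

theorem submatrix_mem_Sd3 (e : Equiv.Perm (Fin d)) {A : Matrix (Fin d) (Fin d) ℝ}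
    (hA : A ∈ Sd3 d) : A.submatrix e e ∈ Sd3 d := by
  obtain ⟨hsymm, hdiag, hrow⟩ := hA
  exact ⟨by rw [transpose_submatrix, hsymm], fun i => hdiag (e i),
    fun i => (Equiv.sum_comp e (A (e i))).trans (hrow (e i))⟩

theorem finrank_Sd1 (hd : 2 ≤ d) : Module.finrank ℝ (Sd1 d) = 1 :=
  finrank_span_singleton (Jmat_sub_one_ne_zero hd)

theorem finrank_Sd2 (hd : 3 ≤ d) : Module.finrank ℝ (Sd2 d) = d - 1 := by
  have hinj := pairSum_injective (n := Fin d) (by simpa using hd)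
  have hsum_ne : (∑ i, LinearMap.proj i : Module.Dual ℝ (Fin d → ℝ)) ≠ 0 := by
    intro h
    simpa using LinearMap.congr_fun h (Pi.single ⟨0, by omega⟩ 1)
  have hker := Module.Dual.finrank_ker_add_one_of_ne_zero hsum_ne
  rw [Module.finrank_fin_fun] at hker
  rw [Sd2_eq_map, ← (Submodule.equivMapOfInjective _ hinj _).finrank_eq]
  omega

theorem finrank_Sd3 (hd : 3 ≤ d) : Module.finrank ℝ (Sd3 d) = d * (d - 3) / 2 := by
  have h := Submodule.finrank_sup_add_finrank_inf_eq (LinearMap.range (pairSum (Fin d))) (Sd3 d)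
  rw [range_pairSum_sup_Sd3 hd, finrank_Ssym,
    frobeniusOrthogonal_range_pairSum_Sd3.disjoint.eq_bot, finrank_bot,
    LinearMap.finrank_range_of_inj (pairSum_injective (by simpa using hd)),
    Module.finrank_fin_fun] at h
  rw [← Nat.choose_two_sub_self]
  omega

end Decomposition

/-- for `d ≥ 4`, the space `𝕊_d` of symmetric matrices with zero diagonal
is the orthogonal (Frobenius) direct sum of the `S_d`-invariant subspaces `𝕊_{d,1}`,
`𝕊_{d,2}`, `𝕊_{d,3}`, of dimensions `1`, `d − 1` and `d(d−3)/2` respectively. -/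
theorem symmetric_zero_diag_decomposition (d : ℕ) (hd : 4 ≤ d) :
    Sd1 d ⊔ Sd2 d ⊔ Sd3 d = Ssym d ∧
    (∀ A ∈ Sd1 d, ∀ B ∈ Sd2 d, Matrix.trace (Aᵀ * B) = 0) ∧
    (∀ A ∈ Sd1 d, ∀ B ∈ Sd3 d, Matrix.trace (Aᵀ * B) = 0) ∧
    (∀ A ∈ Sd2 d, ∀ B ∈ Sd3 d, Matrix.trace (Aᵀ * B) = 0) ∧
    (∀ σ : Equiv.Perm (Fin d), ∀ A ∈ Sd1 d, permMat σ * A * (permMat σ)ᵀ ∈ Sd1 d) ∧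
    (∀ σ : Equiv.Perm (Fin d), ∀ A ∈ Sd2 d, permMat σ * A * (permMat σ)ᵀ ∈ Sd2 d) ∧
    (∀ σ : Equiv.Perm (Fin d), ∀ A ∈ Sd3 d, permMat σ * A * (permMat σ)ᵀ ∈ Sd3 d) ∧
    Module.finrank ℝ (Sd1 d) = 1 ∧
    Module.finrank ℝ (Sd2 d) = d - 1 ∧
    Module.finrank ℝ (Sd3 d) = d * (d - 3) / 2 := by
  have hd3 : 3 ≤ d := by omega
  refine ⟨by rw [Sd1_sup_Sd2, range_pairSum_sup_Sd3 hd3], frobeniusOrthogonal_Sd1_Sd2,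
    frobeniusOrthogonal_range_pairSum_Sd3.mono_left (Sd1_sup_Sd2 ▸ le_sup_left),
    frobeniusOrthogonal_range_pairSum_Sd3.mono_left (Sd1_sup_Sd2 ▸ le_sup_right),
    fun σ A hA => permMat_mul_mul_transpose σ A ▸ submatrix_mem_Sd1 _ hA,
    fun σ A hA => permMat_mul_mul_transpose σ A ▸ submatrix_mem_Sd2 _ hA,
    fun σ A hA => permMat_mul_mul_transpose σ A ▸ submatrix_mem_Sd3 _ hA,
    finrank_Sd1 (by omega), finrank_Sd2 hd3, finrank_Sd3 hd3⟩
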